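/- Controlled-escape forcing: let a finite turn-based game graph be given in which every node has at least one outgoing edge, let S, E ⊆ V and j ∈ {0,1}, and let T = Trap_j(S, E). Then player j has a strategy such that for every node v ∈ T, every infinite play w starting at v consistent with that strategy satisfies: for every k, if w i ∉ E for all i ≤ k, then w k ∈ T \ E ⊆ S. That is, from any node of Trap_j(S, E), player j can force the play to remain inside Trap_j(S, E) (hence inside S) unless and until it reaches E. -/
import Mathlib


namespace Stmt10

variable {V : Type*}

/-- An infinite play: every step is an edge of the player owning the current node. -/
def IsPlay (owner : V → Fin 2) (ρ : Fin 2 → V → V → Prop) (w : ℕ → V) : Prop :=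
  ∀ k : ℕ, ρ (owner (w k)) (w k) (w (k + 1))

/-- A strategy maps a finite history together with the current node to the next node. -/
abbrev Strategy (V : Type*) := List V → V → V

/-- A strategy of player `j` must choose edges of `ρ j` at nodes owned by player `j`. -/
def ValidStrategy (owner : V → Fin 2) (ρ : Fin 2 → V → V → Prop)
    (j : Fin 2) (σ : Strategy V) : Prop :=
  ∀ (h : List V) (v : V), owner v = j → ρ j v (σ h v)

/-- A play is consistent with a strategy of player `j` if at every position owned
by player `j`, the next node is the one chosen by the strategy. -/
def Consistent (owner : V → Fin 2) (j : Fin 2) (σ : Strategy V) (w : ℕ → V) : Prop :=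
  ∀ k : ℕ, owner (w k) = j → w (k + 1) = σ ((List.range k).map w) (w k)

/-- The controllable predecessor `CPre_j(X)`: nodes from which player `j` can
ensure that the next node is in `X` — if owned by `j`, some successor lies in
`X`; if owned by the opponent, every successor lies in `X`. -/
def CPre (owner : V → Fin 2) (ρ : Fin 2 → V → V → Prop) (j : Fin 2) (X : Set V) :
    Set V :=
  {v | if owner v = j then ∃ u, ρ j v u ∧ u ∈ X else ∀ u, ρ (1 - j) v u → u ∈ X}

/-- The attractor `Attr_j(g)`: the least set `X` with `g ∪ CPre_j(X) ⊆ X`. -/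
def Attr (owner : V → Fin 2) (ρ : Fin 2 → V → V → Prop) (j : Fin 2) (g : Set V) :
    Set V :=
  ⋂₀ {X : Set V | g ∪ CPre owner ρ j X ⊆ X}

/-- The controlled-escape set `Trap_j(S, E)`: the greatest set `X` with
`X ⊆ E ∪ (S ∩ CPre_j(X))`. -/
def Trap (owner : V → Fin 2) (ρ : Fin 2 → V → V → Prop) (j : Fin 2) (S E : Set V) :
    Set V :=
  ⋃₀ {X : Set V | X ⊆ E ∪ (S ∩ CPre owner ρ j X)}

/-- controlled-escape forcing: in a finite turn-based game graph
where every node has at least one outgoing edge, let `T = Trap_j(S, E)`.  Then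
`T \ E ⊆ S`, and player `j` has a strategy such that every infinite play
consistent with it, starting from any node of `T`, remains inside `T \ E`
(hence inside `S`) unless and until it reaches `E`: for every `k`, if the play
avoids `E` up to position `k`, then its position-`k` node is in `T \ E`. -/
theorem trap_forcing
    [Fintype V] (owner : V → Fin 2) (ρ : Fin 2 → V → V → Prop)
    (hout : ∀ v : V, ∃ u : V, ρ (owner v) v u)
    (S E : Set V) (j : Fin 2) :
    Trap owner ρ j S E \ E ⊆ S ∧
    ∃ σ : Strategy V, ValidStrategy owner ρ j σ ∧
      ∀ v ∈ Trap owner ρ j S E, ∀ w : ℕ → V,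
        IsPlay owner ρ w → w 0 = v → Consistent owner j σ w →
          ∀ k : ℕ, (∀ i ≤ k, w i ∉ E) → w k ∈ Trap owner ρ j S E \ E := by
  classical
  set T := Trap owner ρ j S E with hT
  have hmono : ∀ X Y : Set V, X ⊆ Y → CPre owner ρ j X ⊆ CPre owner ρ j Y := by
    intro X Y hXY v hv
    simp only [CPre, Set.mem_setOf_eq] at hv ⊢
    split_ifs with h
    · simp only [h, if_true] at hv
      obtain ⟨u, hu, huX⟩ := hv
      exact ⟨u, hu, hXY huX⟩
    · simp only [h, if_false] at hv
      exact fun u hu => hXY (hv u hu)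
  have hTfix : T ⊆ E ∪ (S ∩ CPre owner ρ j T) := by
    intro x hx
    obtain ⟨X, hX, hxX⟩ := hx
    have hXT : X ⊆ T := fun y hy => ⟨X, hX, hy⟩
    rcases hX hxX with h | ⟨hS, hC⟩
    · exact Or.inl h
    · exact Or.inr ⟨hS, hmono X T hXT hC⟩
  have hTS : T \ E ⊆ S := by
    intro x hx
    rcases hTfix hx.1 with h | ⟨hS, _⟩
    · exact absurd h hx.2
    · exact hS
  refine ⟨hTS, ?_⟩
  -- the strategy
  refine ⟨fun _ v => if h : ∃ u, ρ j v u ∧ u ∈ T then h.choose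
      else if h2 : ∃ u, ρ j v u then h2.choose else v, ?_, ?_⟩
  · intro h v hv
    by_cases h1 : ∃ u, ρ j v u ∧ u ∈ T
    · simp only [dif_pos h1]
      exact h1.choose_spec.1
    · have h2 : ∃ u, ρ j v u := by
        obtain ⟨u, hu⟩ := hout v
        rw [hv] at hu
        exact ⟨u, hu⟩
      simp only [dif_neg h1, dif_pos h2]
      exact h2.choose_spec
  · intro v hv w hplay hw0 hcons k
    induction k with
    | zero =>
      intro hE
      exact ⟨hw0 ▸ hv, hE 0 le_rfl⟩
    | succ n ih =>
      intro hE
      have hwn : w n ∈ T \ E := ih (fun i hi => hE i (hi.trans (Nat.le_succ n)))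
      have hC : w n ∈ CPre owner ρ j T := by
        rcases hTfix hwn.1 with h | ⟨_, hC⟩
        · exact absurd h hwn.2
        · exact hC
      have hstep : w (n + 1) ∈ T := by
        simp only [CPre, Set.mem_setOf_eq] at hC
        by_cases ho : owner (w n) = j
        · simp only [ho, if_true] at hC
          have := hcons n ho
          rw [this]
          simp only [dif_pos hC]
          exact hC.choose_spec.2
        · simp only [ho, if_false] at hC
          have hown : owner (w n) = 1 - j := by
            have : ∀ a b : Fin 2, a ≠ b → a = 1 - b := by decide
            exact this _ _ ho
          have := hplay n
          rw [hown] at this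
          exact hC _ this
      exact ⟨hstep, hE (n + 1) le_rfl⟩

end Stmt10
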